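/- Let R be a commutative domain, σ a ring endomorphism of R, and M an R-module. Then the Nagata extension R⊕_σM is a semicommutative ring. -/

import Mathlib

/-- The Nagata extension `R ⊕_σ M` of a commutative ring `R` by an `R`-module `M` along a
ring endomorphism `σ` of `R`: the underlying additive group is `R × M`, with multiplication
`(a, m) * (b, n) = (a * b, σ a • n + b • m)`. -/
@[nolint unusedArguments]
def Nagata (R : Type*) [CommRing R] (σ : R →+* R) (M : Type*)
    [AddCommGroup M] [Module R M] : Type _ := R × M

namespace Nagata

variable {R : Type*} [CommRing R] {σ : R →+* R} {M : Type*} [AddCommGroup M] [Module R M]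

instance : AddCommGroup (Nagata R σ M) := inferInstanceAs (AddCommGroup (R × M))

/-- The element `(a, m)` of the Nagata extension. -/
def mk (a : R) (m : M) : Nagata R σ M := (a, m)

instance : Ring (Nagata R σ M) where
  __ := (inferInstance : AddCommGroup (Nagata R σ M))
  mul x y := (x.1 * y.1, σ x.1 • y.2 + y.1 • x.2)
  one := ((1 : R), (0 : M))
  left_distrib x y z := by
    refine Prod.ext ?_ ?_
    · show x.1 * (y.1 + z.1) = x.1 * y.1 + x.1 * z.1; ring
    · show σ x.1 • (y.2 + z.2) + (y.1 + z.1) • x.2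
          = (σ x.1 • y.2 + y.1 • x.2) + (σ x.1 • z.2 + z.1 • x.2)
      rw [smul_add, add_smul]; abel
  right_distrib x y z := by
    refine Prod.ext ?_ ?_
    · show (x.1 + y.1) * z.1 = x.1 * z.1 + y.1 * z.1; ring
    · show σ (x.1 + y.1) • z.2 + z.1 • (x.2 + y.2)
          = (σ x.1 • z.2 + z.1 • x.2) + (σ y.1 • z.2 + z.1 • y.2)
      rw [map_add, add_smul, smul_add]; abel
  zero_mul x := by
    refine Prod.ext ?_ ?_
    · show (0 : R) * x.1 = 0; ring
    · show σ (0 : R) • x.2 + x.1 • (0 : M) = 0; simp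
  mul_zero x := by
    refine Prod.ext ?_ ?_
    · show x.1 * (0 : R) = 0; ring
    · show σ x.1 • (0 : M) + (0 : R) • x.2 = 0; simp
  mul_assoc x y z := by
    refine Prod.ext ?_ ?_
    · show x.1 * y.1 * z.1 = x.1 * (y.1 * z.1); ring
    · show σ (x.1 * y.1) • z.2 + z.1 • (σ x.1 • y.2 + y.1 • x.2)
          = σ x.1 • (σ y.1 • z.2 + z.1 • y.2) + (y.1 * z.1) • x.2
      rw [map_mul, mul_smul, smul_add, smul_add, mul_smul, smul_comm z.1 (σ x.1),
        smul_comm z.1 y.1]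
      abel
  one_mul x := by
    refine Prod.ext ?_ ?_
    · show 1 * x.1 = x.1; ring
    · show σ 1 • x.2 + x.1 • (0 : M) = x.2; simp
  mul_one x := by
    refine Prod.ext ?_ ?_
    · show x.1 * 1 = x.1; ring
    · show σ x.1 • (0 : M) + (1 : R) • x.2 = x.2; simp

end Nagata

/-- A ring `S` is semicommutative if `a * b = 0` implies `a * r * b = 0` for every `r`. -/
def IsSemicommutativeRing (S : Type*) [Ring S] : Prop :=
  ∀ a b : S, a * b = 0 → ∀ r : S, a * r * b = 0

/-!
If `(a, m) (b, n) = 0` then `a b = 0`, so in a domain `a = 0` or `b = 0`. When one of the two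
scalar parts vanishes, the whole product `(a, m) (r, p) (b, n)` is a multiple of the
vanishing `M`-component of `(a, m) (b, n)`: it is `r (b m)` if `a = 0` and `σ r (σ a n)` if
`b = 0`.
-/

namespace Nagata

variable {R : Type*} [CommRing R] {σ : R →+* R} {M : Type*} [AddCommGroup M] [Module R M]

theorem fst_mul (x y : Nagata R σ M) : (x * y).1 = x.1 * y.1 := rfl

theorem snd_mul (x y : Nagata R σ M) : (x * y).2 = σ x.1 • y.2 + y.1 • x.2 := rfl

theorem mul_eq_zero_iff {x y : Nagata R σ M} :
    x * y = 0 ↔ x.1 * y.1 = 0 ∧ σ x.1 • y.2 + y.1 • x.2 = 0 :=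
  Prod.ext_iff

theorem mul_mul_eq_zero_of_fst_left_eq_zero {a b : Nagata R σ M} (hab : a * b = 0)
    (ha : a.1 = 0) (r : Nagata R σ M) : a * r * b = 0 := by
  have hm : b.1 • a.2 = 0 := by simpa [ha] using (mul_eq_zero_iff.mp hab).2
  refine mul_eq_zero_iff.mpr ⟨by simp [fst_mul, ha], ?_⟩
  simp only [fst_mul, snd_mul, ha, zero_mul, map_zero, zero_smul, zero_add,
    smul_comm b.1 r.1, hm, smul_zero]

theorem mul_mul_eq_zero_of_fst_right_eq_zero {a b : Nagata R σ M} (hab : a * b = 0)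
    (hb : b.1 = 0) (r : Nagata R σ M) : a * r * b = 0 := by
  have hn : σ a.1 • b.2 = 0 := by simpa [hb] using (mul_eq_zero_iff.mp hab).2
  refine mul_eq_zero_iff.mpr ⟨by simp [fst_mul, hb], ?_⟩
  rw [fst_mul, map_mul, mul_comm, mul_smul, hn, hb]
  simp

theorem isSemicommutativeRing [NoZeroDivisors R] : IsSemicommutativeRing (Nagata R σ M) := by
  intro a b hab r
  rcases mul_eq_zero.mp (mul_eq_zero_iff.mp hab).1 with ha | hb
  · exact mul_mul_eq_zero_of_fst_left_eq_zero hab ha r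
  · exact mul_mul_eq_zero_of_fst_right_eq_zero hab hb r

end Nagata

/-- If `R` is a commutative domain and `M` any `R`-module, then the Nagata extension
`R ⊕_σ M` is a semicommutative ring. -/
theorem nagata_semicommutative_of_isDomain
    (R : Type*) [CommRing R] [IsDomain R] (σ : R →+* R)
    (M : Type*) [AddCommGroup M] [Module R M] :
    IsSemicommutativeRing (Nagata R σ M) :=
  Nagata.isSemicommutativeRing
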